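/- For every two finite simple graphs G and H, the ultimate categorical independence ratio of the disjoint union equals that of the tensor product: A(G + H) = A(G × H). -/

import Mathlib

open SimpleGraph Filter Topology

variable {V W : Type*}

/-- The tensor (categorical) product of two simple graphs. -/
def tensorProd (G : SimpleGraph V) (H : SimpleGraph W) : SimpleGraph (V × W) where
  Adj p q := G.Adj p.1 q.1 ∧ H.Adj p.2 q.2
  symm := ⟨fun _ _ h => ⟨h.1.symm, h.2.symm⟩⟩
  loopless := ⟨fun p h => G.loopless.irrefl p.1 h.1⟩

/-- The k-fold tensor power of a simple graph. -/
def tensorPow (G : SimpleGraph V) (k : ℕ) : SimpleGraph (Fin k → V) where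
  Adj u v := u ≠ v ∧ ∀ i, G.Adj (u i) (v i)
  symm := ⟨fun _ _ h => ⟨h.1.symm, fun i => (h.2 i).symm⟩⟩
  loopless := ⟨fun _ h => h.1 rfl⟩

/-- The tensor product of k copies of G with m copies of H. -/
def mixPow (G : SimpleGraph V) (H : SimpleGraph W) (k m : ℕ) :
    SimpleGraph ((Fin k → V) × (Fin m → W)) where
  Adj p q := p ≠ q ∧ (∀ i, G.Adj (p.1 i) (q.1 i)) ∧ ∀ j, H.Adj (p.2 j) (q.2 j)
  symm := ⟨fun _ _ h => ⟨h.1.symm, fun i => (h.2.1 i).symm, fun j => (h.2.2 j).symm⟩⟩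
  loopless := ⟨fun _ h => h.1 rfl⟩

/-- A set of vertices is independent: no two of its members are adjacent. -/
def IsIndepSet (G : SimpleGraph V) (s : Set V) : Prop :=
  ∀ ⦃u⦄, u ∈ s → ∀ ⦃v⦄, v ∈ s → ¬ G.Adj u v

/-- The independence number of a finite graph. -/
noncomputable def indepNum (G : SimpleGraph V) [Fintype V] : ℕ :=
  sSup {n | ∃ s : Finset V, _root_.IsIndepSet G ↑s ∧ s.card = n}

/-- The independence ratio of a finite graph. -/
noncomputable def indepRatio (G : SimpleGraph V) [Fintype V] : ℝ :=
  (_root_.indepNum G : ℝ) / (Fintype.card V : ℝ)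

/-- The (vertex) neighborhood of a set of vertices. -/
def nbhdSet (G : SimpleGraph V) (s : Set V) : Set V := {v | ∃ u ∈ s, G.Adj u v}

/-- a(G): the maximum of |I|/(|I|+|N(I)|) over nonempty independent sets I. -/
noncomputable def aRatio (G : SimpleGraph V) [Fintype V] : ℝ :=
  sSup {r | ∃ I : Finset V, I.Nonempty ∧ _root_.IsIndepSet G ↑I ∧
    r = (I.card : ℝ) / ((I.card : ℝ) + ((nbhdSet G ↑I).ncard : ℝ))}

/-- A fractional perfect matching of a finite graph. -/
def IsFPM (G : SimpleGraph V) [Fintype V] [DecidableEq V] (f : Sym2 V → ℝ) : Prop :=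
  (∀ e, 0 ≤ f e) ∧ (∀ e, e ∉ G.edgeSet → f e = 0) ∧
  (∀ v : V, ∑ e ∈ Finset.univ.filter (fun e : Sym2 V => v ∈ e), f e ≤ 1) ∧
  ∑ e : Sym2 V, f e = (Fintype.card V : ℝ) / 2


/-!
Sorting the vertices of `(G + H)^m` by the set `T` of coordinates that lie in `G` splits
`(G + H)^m` into pairwise non-adjacent copies of `G^|T| × H^(m - |T|)`, so
`α((G + H)^m) = ∑_T α(G^|T| × H^(m - |T|))`. Padding an independent set with arbitrary extra
coordinates shows that the ratio `α(G^k × H^l) / (|V|^k |W|^l)` grows with `k` and `l` (as long as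
`k + l > 0`); in particular it is at most the limit `b` of the ratios of `(G × H)^N = G^N × H^N`,
whence `A(G + H) ≤ b`. Conversely, all but an exponentially small part of the binomial weight
`∑_T |V|^|T| |W|^(m - |T|)` sits on sets `T` with `|T| ≥ n` and `m - |T| ≥ n`, where the ratio is at
least that of `(G × H)^n`; hence `A(G + H) ≥ α((G × H)^n) / (|V| |W|)^n` for every `n ≥ 1`.
-/

section IndepNum

variable {X Y Z : Type*} {F : SimpleGraph X} {F' : SimpleGraph Y}

theorem bddAbove_card_indepSet [Fintype X] (F : SimpleGraph X) :
    BddAbove {n | ∃ s : Finset X, _root_.IsIndepSet F ↑s ∧ s.card = n} :=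
  ⟨Fintype.card X, by rintro n ⟨s, -, rfl⟩; exact s.card_le_univ⟩

theorem exists_isIndepSet_card_eq_indepNum [Fintype X] (F : SimpleGraph X) :
    ∃ s : Finset X, _root_.IsIndepSet F ↑s ∧ s.card = _root_.indepNum F :=
  Nat.sSup_mem (s := {n | ∃ s : Finset X, _root_.IsIndepSet F ↑s ∧ s.card = n})
    ⟨0, ∅, fun u hu => by simp at hu, rfl⟩ (bddAbove_card_indepSet F)

theorem IsIndepSet.card_le_indepNum [Fintype X] {s : Finset X} (hs : _root_.IsIndepSet F ↑s) :
    s.card ≤ _root_.indepNum F :=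
  le_csSup (bddAbove_card_indepSet F) ⟨s, hs, rfl⟩

theorem card_mul_le_indepNum [Fintype X] [Fintype Y] [Fintype Z] (f : X × Z → Y)
    (hf : Function.Injective f) (hadj : ∀ p q, F'.Adj (f p) (f q) → F.Adj p.1 q.1) :
    _root_.indepNum F * Fintype.card Z ≤ _root_.indepNum F' := by
  classical
  obtain ⟨s, hs, hcard⟩ := exists_isIndepSet_card_eq_indepNum F
  have hind : _root_.IsIndepSet F' ↑((s ×ˢ Finset.univ).image f) := by
    simp only [Finset.coe_image, Finset.coe_product]
    rintro _ ⟨p, hp, rfl⟩ _ ⟨q, hq, rfl⟩ h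
    exact hs hp.1 hq.1 (hadj p q h)
  simpa [Finset.card_image_of_injective _ hf, hcard] using hind.card_le_indepNum

theorem IsIndepSet.map (f : F ↪g F') {s : Finset X} (hs : _root_.IsIndepSet F ↑s) :
    _root_.IsIndepSet F' ↑(s.map f.toEmbedding) := by
  simp only [Finset.coe_map]
  rintro _ ⟨x, hx, rfl⟩ _ ⟨y, hy, rfl⟩ h
  exact hs hx hy (f.map_adj_iff.mp h)

theorem indepNum_le_of_embedding [Fintype X] [Fintype Y] (f : F ↪g F') :
    _root_.indepNum F ≤ _root_.indepNum F' := by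
  obtain ⟨s, hs, hcard⟩ := exists_isIndepSet_card_eq_indepNum F
  simpa [hcard] using (hs.map f).card_le_indepNum

theorem indepNum_eq_of_iso [Fintype X] [Fintype Y] (f : F ≃g F') :
    _root_.indepNum F = _root_.indepNum F' :=
  (indepNum_le_of_embedding f.toEmbedding).antisymm (indepNum_le_of_embedding f.symm.toEmbedding)

theorem IsIndepSet.card_le_indepNum_of_subset_range [Fintype X] (f : F ↪g F') {s : Finset Y}
    (hs : _root_.IsIndepSet F' ↑s) (hsf : ↑s ⊆ Set.range f) : s.card ≤ _root_.indepNum F := by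
  set t := s.preimage f f.injective.injOn
  have ht : _root_.IsIndepSet F ↑t :=
    fun x hx y hy h => hs (by simpa [t] using hx) (by simpa [t] using hy) (f.map_adj_iff.mpr h)
  calc s.card ≤ (t.map f.toEmbedding).card := Finset.card_le_card fun y hy => by
        obtain ⟨x, rfl⟩ := hsf hy
        exact Finset.mem_map_of_mem _ (by simpa [t] using hy)
    _ ≤ _ := by simpa using ht.card_le_indepNum

theorem indepRatio_tensorPow [Fintype X] (F : SimpleGraph X) (n : ℕ) :
    indepRatio (tensorPow F n) = _root_.indepNum (tensorPow F n) / (Fintype.card X : ℝ) ^ n := by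
  simp [indepRatio]

end IndepNum

section MixPow

variable (G : SimpleGraph V) (H : SimpleGraph W) {k l m : ℕ}

theorem mixPow_adj_of_forall (hkl : 0 < k + l) {p q : (Fin k → V) × (Fin l → W)}
    (hG : ∀ i, G.Adj (p.1 i) (q.1 i)) (hH : ∀ j, H.Adj (p.2 j) (q.2 j)) :
    (mixPow G H k l).Adj p q := by
  refine ⟨?_, hG, hH⟩
  rintro rfl
  rcases Nat.eq_zero_or_pos k with rfl | hk
  · exact H.loopless.irrefl _ (hH ⟨0, by omega⟩)
  · exact G.loopless.irrefl _ (hG ⟨0, hk⟩)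

def mixPowIsoTensorPow (n : ℕ) : mixPow G H n n ≃g tensorPow (tensorProd G H) n where
  toEquiv := (Equiv.arrowProdEquivProdArrow _ _ _).symm
  map_rel_iff' {p q} := by
    simp [mixPow, tensorPow, tensorProd, forall_and]

theorem sumMap_comp_injective {ι α β : Type*} (e : ι ≃ α ⊕ β) :
    Function.Injective fun (p : (α → V) × (β → W)) i => Sum.map p.1 p.2 (e i) := by
  intro p q h
  have h' : ∀ j, Sum.map p.1 p.2 j = Sum.map q.1 q.2 j := fun j => by
    simpa using congrFun h (e.symm j)
  exact Prod.ext (funext fun j => Sum.inl_injective (h' (.inl j)))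
    (funext fun j => Sum.inr_injective (h' (.inr j)))

def mixPowEmbedding (e : Fin m ≃ Fin k ⊕ Fin l) : mixPow G H k l ↪g tensorPow (G ⊕g H) m where
  toFun p i := Sum.map p.1 p.2 (e i)
  inj' := sumMap_comp_injective e
  map_rel_iff' {p q} := by
    change (_ ≠ _ ∧ ∀ i, (G ⊕g H).Adj (Sum.map p.1 p.2 (e i)) (Sum.map q.1 q.2 (e i))) ↔ _
    rw [(Function.Embedding.injective _).ne_iff]
    simp [mixPow, ← e.symm.forall_congr_right, Sum.forall]

@[simp]
theorem mixPowEmbedding_apply (e : Fin m ≃ Fin k ⊕ Fin l) (p : (Fin k → V) × (Fin l → W))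
    (i : Fin m) : mixPowEmbedding G H e p i = Sum.map p.1 p.2 (e i) :=
  rfl

end MixPow

section Pattern

variable {G : SimpleGraph V} {H : SimpleGraph W} {k l m : ℕ}

def leftSupport (u : Fin m → V ⊕ W) : Finset (Fin m) := Finset.univ.filter fun i => (u i).isLeft

theorem SimpleGraph.Adj.isLeft_eq {x y : V ⊕ W} (h : (G ⊕g H).Adj x y) : x.isLeft = y.isLeft := by
  cases x <;> cases y <;> simp_all

theorem leftSupport_eq_of_adj {u u' : Fin m → V ⊕ W} (h : (tensorPow (G ⊕g H) m).Adj u u') :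
    leftSupport u = leftSupport u' := by
  ext i
  simp [leftSupport, (h.2 i).isLeft_eq]

theorem mem_range_mixPowEmbedding_iff (e : Fin m ≃ Fin k ⊕ Fin l) (u : Fin m → V ⊕ W) :
    u ∈ Set.range (mixPowEmbedding G H e) ↔ ∀ i, (u i).isLeft = (e i).isLeft := by
  constructor
  · rintro ⟨p, rfl⟩ i
    exact Sum.isLeft_map _ _ _
  · intro h
    have hl : ∀ j, ∃ x, u (e.symm (.inl j)) = .inl x := fun j =>
      Sum.isLeft_iff.mp (by rw [h, e.apply_symm_apply]; rfl)
    have hr : ∀ j, ∃ y, u (e.symm (.inr j)) = .inr y := fun j =>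
      Sum.isRight_iff.mp (Sum.isLeft_eq_false.mp (by rw [h, e.apply_symm_apply]; rfl))
    choose f hf using hl
    choose g hg using hr
    refine ⟨(f, g), funext fun i => ?_⟩
    rw [mixPowEmbedding_apply]
    rcases hi : e i with j | j
    · rw [← e.symm_apply_apply i, hi, hf]; rfl
    · rw [← e.symm_apply_apply i, hi, hg]; rfl

noncomputable def leftPatternEquiv (T : Finset (Fin m)) : Fin m ≃ Fin T.card ⊕ Fin (m - T.card) :=
  (Equiv.sumCompl (· ∈ T)).symm.trans
    (Equiv.sumCongr T.equivFin (Fintype.equivFinOfCardEq (by simp [Fintype.card_subtype_compl])))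

theorem isLeft_leftPatternEquiv (T : Finset (Fin m)) (i : Fin m) :
    (leftPatternEquiv T i).isLeft = decide (i ∈ T) := by
  by_cases hi : i ∈ T <;> simp [leftPatternEquiv, Equiv.sumCompl, hi]

theorem mem_range_mixPowEmbedding_leftPatternEquiv_iff (T : Finset (Fin m))
    (u : Fin m → V ⊕ W) :
    u ∈ Set.range (mixPowEmbedding G H (leftPatternEquiv T)) ↔ leftSupport u = T := by
  rw [mem_range_mixPowEmbedding_iff, Finset.ext_iff]
  refine forall_congr' fun i => ?_
  rw [isLeft_leftPatternEquiv]
  simp only [leftSupport, Finset.mem_filter, Finset.mem_univ, true_and]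
  cases (u i).isLeft <;> simp

end Pattern

section Decomposition

variable [Fintype V] [Fintype W] (G : SimpleGraph V) (H : SimpleGraph W)

theorem indepNum_tensorPow_sum_le (m : ℕ) :
    _root_.indepNum (tensorPow (G ⊕g H) m)
      ≤ ∑ T : Finset (Fin m), _root_.indepNum (mixPow G H T.card (m - T.card)) := by
  obtain ⟨U, hU, hcard⟩ := exists_isIndepSet_card_eq_indepNum (tensorPow (G ⊕g H) m)
  rw [← hcard, Finset.card_eq_sum_card_fiberwise (f := leftSupport) (t := Finset.univ)
    fun _ _ => Finset.mem_univ _]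
  refine Finset.sum_le_sum fun T _ => ?_
  refine IsIndepSet.card_le_indepNum_of_subset_range (mixPowEmbedding G H (leftPatternEquiv T))
    (fun u hu v hv => hU (Finset.mem_filter.mp hu).1 (Finset.mem_filter.mp hv).1) fun u hu => ?_
  exact (mem_range_mixPowEmbedding_leftPatternEquiv_iff T u).mpr (Finset.mem_filter.mp hu).2

theorem sum_le_indepNum_tensorPow (m : ℕ) :
    ∑ T : Finset (Fin m), _root_.indepNum (mixPow G H T.card (m - T.card))
      ≤ _root_.indepNum (tensorPow (G ⊕g H) m) := by
  classical
  choose I hI hIcard using fun T : Finset (Fin m) =>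
    exists_isIndepSet_card_eq_indepNum (mixPow G H T.card (m - T.card))
  set J := fun T => (I T).map (mixPowEmbedding G H (leftPatternEquiv T)).toEmbedding
  have hJ : ∀ T, ∀ u ∈ J T, leftSupport u = T := fun T u hu => by
    rw [← mem_range_mixPowEmbedding_leftPatternEquiv_iff (G := G) (H := H)]
    obtain ⟨p, -, rfl⟩ := Finset.mem_map.mp hu
    exact ⟨p, rfl⟩
  have hdisj : Set.PairwiseDisjoint ↑(Finset.univ : Finset (Finset (Fin m))) J :=
    fun T _ T' _ hTT' => Finset.disjoint_left.mpr fun u hu hu' =>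
      hTT' ((hJ T u hu).symm.trans (hJ T' u hu'))
  have hind : _root_.IsIndepSet (tensorPow (G ⊕g H) m) ↑(Finset.univ.biUnion J) := by
    intro u hu u' hu' hadj
    obtain ⟨T, -, huT⟩ := Finset.mem_biUnion.mp hu
    obtain ⟨T', -, hu'T'⟩ := Finset.mem_biUnion.mp hu'
    obtain rfl : T = T' := by
      rw [← hJ T u huT, ← hJ T' u' hu'T', leftSupport_eq_of_adj hadj]
    exact (hI T).map _ huT hu'T' hadj
  have := hind.card_le_indepNum
  simpa [Finset.card_biUnion hdisj, J, hIcard] using this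

theorem indepNum_tensorPow_sum (m : ℕ) :
    _root_.indepNum (tensorPow (G ⊕g H) m)
      = ∑ T : Finset (Fin m), _root_.indepNum (mixPow G H T.card (m - T.card)) :=
  (indepNum_tensorPow_sum_le G H m).antisymm (sum_le_indepNum_tensorPow G H m)

end Decomposition

theorem indepNum_mixPow_mul_le [Fintype V] [Fintype W] (G : SimpleGraph V) (H : SimpleGraph W)
    {k l k' l' : ℕ} (hkl : 0 < k + l) (hk : k ≤ k') (hl : l ≤ l') :
    _root_.indepNum (mixPow G H k l) * (Fintype.card V ^ (k' - k) * Fintype.card W ^ (l' - l))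
      ≤ _root_.indepNum (mixPow G H k' l') := by
  obtain ⟨a, rfl⟩ := Nat.exists_eq_add_of_le hk
  obtain ⟨b, rfl⟩ := Nat.exists_eq_add_of_le hl
  let pad := (Equiv.prodProdProdComm _ _ _ _).trans
    ((Fin.appendEquiv (α := V) k a).prodCongr (Fin.appendEquiv (α := W) l b))
  have hpad := card_mul_le_indepNum (F := mixPow G H k l) (F' := mixPow G H (k + a) (l + b))
    (Z := (Fin a → V) × (Fin b → W)) pad pad.injective fun p q h =>
      mixPow_adj_of_forall G H hkl (fun i => by simpa [pad] using h.2.1 (Fin.castAdd a i))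
        (fun j => by simpa [pad] using h.2.2 (Fin.castAdd b j))
  simpa using hpad

theorem pow_le_two_pow_mul_half_pow {x : ℝ} (hx : 0 ≤ x) {t n : ℕ} (htn : t ≤ n) :
    x ^ t ≤ 2 ^ n * (x / 2) ^ t :=
  calc x ^ t = 2 ^ t * (x / 2) ^ t := by rw [← mul_pow]; ring_nf
    _ ≤ 2 ^ n * (x / 2) ^ t := by gcongr; norm_num

theorem add_pow_sub_le_sum_filter {x y : ℝ} (hx : 0 ≤ x) (hy : 0 ≤ y) (n m : ℕ) :
    (x + y) ^ m - 2 ^ n * ((x / 2 + y) ^ m + (x + y / 2) ^ m)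
      ≤ ∑ T : Finset (Fin m) with n ≤ T.card ∧ n ≤ m - T.card, x ^ T.card * y ^ (m - T.card) := by
  have hT : ∀ T : Finset (Fin m), x ^ T.card * y ^ (m - T.card)
      ≤ (if n ≤ T.card ∧ n ≤ m - T.card then x ^ T.card * y ^ (m - T.card) else 0)
        + 2 ^ n * ((x / 2) ^ T.card * y ^ (m - T.card) + x ^ T.card * (y / 2) ^ (m - T.card)) := by
    intro T
    split_ifs with hbal
    · have : 0 ≤ 2 ^ n * ((x / 2) ^ T.card * y ^ (m - T.card)
          + x ^ T.card * (y / 2) ^ (m - T.card)) := by positivity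
      linarith
    · rcases not_and_or.mp hbal with hk | hl
      · have := mul_le_mul_of_nonneg_right (pow_le_two_pow_mul_half_pow hx (not_le.mp hk).le)
          (pow_nonneg hy (m - T.card))
        have : 0 ≤ 2 ^ n * (x ^ T.card * (y / 2) ^ (m - T.card)) := by positivity
        linarith
      · have := mul_le_mul_of_nonneg_left (pow_le_two_pow_mul_half_pow hy (not_le.mp hl).le)
          (pow_nonneg hx T.card)
        have : 0 ≤ 2 ^ n * ((x / 2) ^ T.card * y ^ (m - T.card)) := by positivity
        linarith
  have hsum := Finset.sum_le_sum fun T (_ : T ∈ Finset.univ) => hT T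
  rw [Finset.sum_add_distrib, ← Finset.mul_sum, Finset.sum_add_distrib, ← Finset.sum_filter,
    Fin.sum_pow_mul_eq_add_pow, Fin.sum_pow_mul_eq_add_pow, Fin.sum_pow_mul_eq_add_pow] at hsum
  linarith

section Ratios

variable [Fintype V] [Fintype W] (G : SimpleGraph V) (H : SimpleGraph W)

theorem indepRatio_tensorPow_tensorProd (n : ℕ) :
    indepRatio (tensorPow (tensorProd G H) n)
      = _root_.indepNum (mixPow G H n n) / ((Fintype.card V : ℝ) * Fintype.card W) ^ n := by
  rw [indepRatio_tensorPow, ← indepNum_eq_of_iso (mixPowIsoTensorPow G H n)]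
  simp

theorem indepRatio_tensorPow_sum (m : ℕ) :
    indepRatio (tensorPow (G ⊕g H) m)
      = _root_.indepNum (tensorPow (G ⊕g H) m) / ((Fintype.card V : ℝ) + Fintype.card W) ^ m := by
  rw [indepRatio_tensorPow]
  simp

variable [Nonempty V] [Nonempty W]

theorem mul_le_indepNum_mixPow {n k l : ℕ} (hn : 0 < n) (hk : n ≤ k) (hl : n ≤ l) :
    indepRatio (tensorPow (tensorProd G H) n)
        * ((Fintype.card V : ℝ) ^ k * (Fintype.card W : ℝ) ^ l)
      ≤ _root_.indepNum (mixPow G H k l) := by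
  have hpad : (_root_.indepNum (mixPow G H n n) : ℝ)
      * ((Fintype.card V : ℝ) ^ (k - n) * (Fintype.card W : ℝ) ^ (l - n))
      ≤ _root_.indepNum (mixPow G H k l) := by
    exact_mod_cast indepNum_mixPow_mul_le G H (by omega) hk hl
  refine le_of_eq_of_le ?_ hpad
  rw [indepRatio_tensorPow_tensorProd, ← pow_mul_pow_sub _ hk, ← pow_mul_pow_sub _ hl]
  field_simp
  ring

theorem indepNum_mixPow_le {b : ℝ}
    (hb : ∀ N, 0 < N → indepRatio (tensorPow (tensorProd G H) N) ≤ b) {k l : ℕ} (hkl : 0 < k + l) :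
    (_root_.indepNum (mixPow G H k l) : ℝ)
      ≤ b * ((Fintype.card V : ℝ) ^ k * (Fintype.card W : ℝ) ^ l) := by
  set N := max k l
  have hpad : (_root_.indepNum (mixPow G H k l) : ℝ)
      * ((Fintype.card V : ℝ) ^ (N - k) * (Fintype.card W : ℝ) ^ (N - l))
      ≤ _root_.indepNum (mixPow G H N N) := by
    exact_mod_cast indepNum_mixPow_mul_le G H hkl (le_max_left k l) (le_max_right k l)
  have hN := hb N (by omega)
  rw [indepRatio_tensorPow_tensorProd, div_le_iff₀ (by positivity), mul_pow,
    ← pow_mul_pow_sub _ (le_max_left k l), ← pow_mul_pow_sub _ (le_max_right k l)] at hN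
  exact le_of_mul_le_mul_right (hpad.trans (hN.trans_eq (by ring))) (by positivity)

theorem indepRatio_tensorPow_tensorProd_le_succ {n : ℕ} (hn : 0 < n) :
    indepRatio (tensorPow (tensorProd G H) n)
      ≤ indepRatio (tensorPow (tensorProd G H) (n + 1)) := by
  have h := mul_le_indepNum_mixPow G H hn (n.le_add_right 1) (n.le_add_right 1)
  rw [indepRatio_tensorPow_tensorProd G H (n + 1), le_div_iff₀ (by positivity)]
  exact h.trans_eq' (by ring)

theorem indepRatio_tensorPow_sum_le {b : ℝ}
    (hb : ∀ N, 0 < N → indepRatio (tensorPow (tensorProd G H) N) ≤ b) {m : ℕ} (hm : 0 < m) :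
    indepRatio (tensorPow (G ⊕g H) m) ≤ b := by
  rw [indepRatio_tensorPow_sum, div_le_iff₀ (by positivity), indepNum_tensorPow_sum,
    ← Fin.sum_pow_mul_eq_add_pow, Finset.mul_sum]
  push_cast
  exact Finset.sum_le_sum fun T _ => indepNum_mixPow_le G H hb (by omega)

theorem indepRatio_tensorPow_tensorProd_mul_le {n : ℕ} (hn : 0 < n) (m : ℕ) :
    indepRatio (tensorPow (tensorProd G H) n)
        * (((Fintype.card V : ℝ) + Fintype.card W) ^ m
          - 2 ^ n * (((Fintype.card V : ℝ) / 2 + Fintype.card W) ^ m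
            + ((Fintype.card V : ℝ) + Fintype.card W / 2) ^ m))
      ≤ _root_.indepNum (tensorPow (G ⊕g H) m) := by
  have hr : 0 ≤ indepRatio (tensorPow (tensorProd G H) n) := by
    rw [indepRatio_tensorPow_tensorProd]; positivity
  calc _ ≤ indepRatio (tensorPow (tensorProd G H) n)
        * ∑ T : Finset (Fin m) with n ≤ T.card ∧ n ≤ m - T.card,
          (Fintype.card V : ℝ) ^ T.card * (Fintype.card W : ℝ) ^ (m - T.card) :=
        mul_le_mul_of_nonneg_left (add_pow_sub_le_sum_filter (by positivity) (by positivity) n m) hr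
    _ ≤ ∑ T : Finset (Fin m) with n ≤ T.card ∧ n ≤ m - T.card,
          (_root_.indepNum (mixPow G H T.card (m - T.card)) : ℝ) := by
        rw [Finset.mul_sum]
        exact Finset.sum_le_sum fun T hT =>
          mul_le_indepNum_mixPow G H hn (Finset.mem_filter.mp hT).2.1 (Finset.mem_filter.mp hT).2.2
    _ ≤ ∑ T : Finset (Fin m), (_root_.indepNum (mixPow G H T.card (m - T.card)) : ℝ) :=
        Finset.sum_le_sum_of_subset_of_nonneg (Finset.filter_subset _ _) fun _ _ _ => by positivity
    _ = _ := by rw [indepNum_tensorPow_sum]; push_cast; rfl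

theorem indepRatio_tensorPow_tensorProd_le_of_tendsto {a : ℝ}
    (ha : Tendsto (fun m : ℕ => indepRatio (tensorPow (G ⊕g H) (m + 1))) atTop (𝓝 a))
    {n : ℕ} (hn : 0 < n) :
    indepRatio (tensorPow (tensorProd G H) n) ≤ a := by
  set v : ℝ := (Fintype.card V : ℝ)
  set w : ℝ := (Fintype.card W : ℝ)
  have hv : 0 < v := by positivity
  have hw : 0 < w := by positivity
  set q₁ := (v / 2 + w) / (v + w)
  set q₂ := (v + w / 2) / (v + w)
  have hlow : ∀ m, indepRatio (tensorPow (tensorProd G H) n) * (1 - 2 ^ n * (q₁ ^ m + q₂ ^ m))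
      ≤ indepRatio (tensorPow (G ⊕g H) m) := fun m => by
    rw [indepRatio_tensorPow_sum, le_div_iff₀ (by positivity)]
    refine le_of_eq_of_le ?_ (indepRatio_tensorPow_tensorProd_mul_le G H hn m)
    simp only [q₁, q₂, v, w, div_pow]
    field_simp
  have hq : ∀ q : ℝ, 0 ≤ q → q < 1 → Tendsto (fun m : ℕ => q ^ (m + 1)) atTop (𝓝 0) :=
    fun q h₀ h₁ => (tendsto_pow_atTop_nhds_zero_of_lt_one h₀ h₁).comp (tendsto_add_atTop_nat 1)
  have hlim := ((hq q₁ (by positivity) ((div_lt_one (by positivity)).mpr (by linarith))).add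
    (hq q₂ (by positivity) ((div_lt_one (by positivity)).mpr (by linarith)))).const_mul (2 ^ n)
    |>.const_sub 1 |>.const_mul (indepRatio (tensorPow (tensorProd G H) n))
  simpa using le_of_tendsto_of_tendsto' hlim ha fun m => hlow (m + 1)

end Ratios

theorem stmt15 (G : SimpleGraph V) (H : SimpleGraph W)
    [Fintype V] [Fintype W] [Nonempty V] [Nonempty W] :
    ∀ a b : ℝ,
      Tendsto (fun n : ℕ => indepRatio (tensorPow (G ⊕g H) (n + 1))) atTop (𝓝 a) →
      Tendsto (fun n : ℕ => indepRatio (tensorPow (tensorProd G H) (n + 1))) atTop (𝓝 b) →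
      a = b := by
  intro a b ha hb
  have hmono : Monotone fun n : ℕ => indepRatio (tensorPow (tensorProd G H) (n + 1)) :=
    monotone_nat_of_le_succ fun n => indepRatio_tensorPow_tensorProd_le_succ G H n.succ_pos
  have hb' : ∀ N, 0 < N → indepRatio (tensorPow (tensorProd G H) N) ≤ b := fun N hN => by
    obtain ⟨n, rfl⟩ := Nat.exists_eq_add_one_of_ne_zero hN.ne'
    exact hmono.ge_of_tendsto hb n
  exact le_antisymm (le_of_tendsto' ha fun m => indepRatio_tensorPow_sum_le G H hb' m.succ_pos)
    (le_of_tendsto' hb fun n => indepRatio_tensorPow_tensorProd_le_of_tendsto G H ha n.succ_pos)
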